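/- Let T be a tree with at least two vertices and let s be a real number. Then 0 is an eigenvalue of the deformed Laplacian matrix M_T(s) if and only if s = 1 or s = −1. -/

import Mathlib

open Filter Topology

/-- The deformed Laplacian matrix `M_G(s) = I - s·A + s²·(D - I)` of a finite simple graph. -/
noncomputable def defLap {V : Type*} [Fintype V] [DecidableEq V] (G : SimpleGraph V) (s : ℝ) :
    Matrix V V ℝ :=
  letI := Classical.decRel G.Adj
  (1 : Matrix V V ℝ) - s • (G.adjMatrix ℝ) +
    s ^ 2 • (Matrix.diagonal (fun v => (G.degree v : ℝ)) - 1)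

/-- The largest (real) eigenvalue of a matrix. -/
noncomputable def lamMax {V : Type*} [Fintype V] (M : Matrix V V ℝ) : ℝ :=
  sSup {μ : ℝ | ∃ v : V → ℝ, v ≠ 0 ∧ M.mulVec v = μ • v}

/-!
Deleting a leaf `u` with neighbour `w` does not change `det M(s)`: since `deg u = 1`, the entry
`M u u` equals `1`, and the Schur complement of that entry only subtracts `s²` from `M w w`,
which is exactly the effect of lowering `deg w` by one. Pruning leaves down to a single vertex
gives `det M_T(s) = 1 - s²` for every tree, and `0` is an eigenvalue iff this determinant vanishes.
-/

namespace SimpleGraph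

variable {V : Type*} [Fintype V] [DecidableEq V] {G : SimpleGraph V}

lemma defLap_apply_self [DecidableRel G.Adj] (s : ℝ) (x : V) :
    defLap G s x x = 1 + s ^ 2 * (G.degree x - 1) := by
  obtain rfl : ‹DecidableRel G.Adj› = Classical.decRel _ := Subsingleton.elim _ _
  simp [defLap]

lemma defLap_apply_of_adj (s : ℝ) {x y : V} (h : G.Adj x y) : defLap G s x y = -s := by
  simp [defLap, h, h.ne]

lemma defLap_apply_of_ne_of_not_adj (s : ℝ) {x y : V} (hne : x ≠ y) (h : ¬ G.Adj x y) :
    defLap G s x y = 0 := by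
  simp [defLap, h, hne]

lemma det_defLap_of_unique [Unique V] (s : ℝ) : (defLap G s).det = 1 - s ^ 2 := by
  classical
  rw [Matrix.det_unique, defLap_apply_self, (IsIsolated.of_subsingleton G _).degree_eq_zero]
  push_cast
  ring

lemma degree_induce_compl_singleton_add [DecidableRel G.Adj] (u : V) (x : ↥({u}ᶜ : Set V)) :
    (G.induce {u}ᶜ).degree x + (if G.Adj x u then 1 else 0) = G.degree x := by
  rw [← card_neighborFinset_eq_degree, ← card_neighborFinset_eq_degree,
    ← Finset.card_map (.subtype (· ∈ ({u}ᶜ : Set V))), map_neighborFinset_induce,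
    Set.toFinset_compl, Set.toFinset_singleton, ← Finset.sdiff_eq_inter_compl,
    Finset.sdiff_singleton_eq_erase]
  split_ifs with h
  · exact Finset.card_erase_add_one (by simpa using h)
  · rw [Finset.erase_eq_of_notMem (by simpa using h), add_zero]

lemma defLap_induce_compl_singleton_apply [DecidableRel G.Adj] {u : V} (hu : G.degree u = 1)
    (s : ℝ) (x y : ↥({u}ᶜ : Set V)) :
    defLap (G.induce {u}ᶜ) s x y = defLap G s x y - defLap G s x u * defLap G s u y := by
  obtain ⟨w, -, hw⟩ := degree_eq_one_iff_existsUnique_adj.mp hu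
  have hxu : (x : V) ≠ u := x.2
  by_cases hxy : x = y
  · subst hxy
    have hdeg := degree_induce_compl_singleton_add (G := G) u x
    rw [defLap_apply_self (G := G), defLap_apply_self (G := G.induce {u}ᶜ), ← hdeg]
    by_cases hadj : G.Adj x u
    · rw [defLap_apply_of_adj s hadj, defLap_apply_of_adj s hadj.symm, if_pos hadj]
      push_cast
      ring
    · rw [defLap_apply_of_ne_of_not_adj s hxu hadj, if_neg hadj]
      push_cast
      ring
  · have hxy' : (x : V) ≠ y := Subtype.coe_ne_coe.mpr hxy
    have hcross : defLap G s x u * defLap G s u y = 0 := by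
      by_cases hx : G.Adj x u
      · have hy : ¬ G.Adj u y := fun hy => hxy' ((hw _ hx.symm).trans (hw _ hy).symm)
        rw [defLap_apply_of_ne_of_not_adj s (Ne.symm y.2) hy, mul_zero]
      · rw [defLap_apply_of_ne_of_not_adj s hxu hx, zero_mul]
    rw [hcross, sub_zero]
    by_cases hadj : G.Adj x y
    · rw [defLap_apply_of_adj s hadj, defLap_apply_of_adj (G := G.induce {u}ᶜ) s hadj]
    · rw [defLap_apply_of_ne_of_not_adj s hxy' hadj,
        defLap_apply_of_ne_of_not_adj (G := G.induce {u}ᶜ) s hxy hadj]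

lemma det_defLap_induce_compl_singleton [DecidableRel G.Adj] {u : V} (hu : G.degree u = 1)
    (s : ℝ) : (defLap (G.induce {u}ᶜ) s).det = (defLap G s).det := by
  set e := Equiv.Set.sumCompl ({u} : Set V)
  set N := (defLap G s).submatrix e e
  have hleaf : N.toBlocks₁₁ = 1 := by
    ext ⟨i, rfl⟩ ⟨j, rfl⟩
    simp [N, e, Matrix.toBlocks₁₁, defLap_apply_self, hu]
  have hschur : N.toBlocks₂₂ - N.toBlocks₂₁ * N.toBlocks₁₂ = defLap (G.induce {u}ᶜ) s := by
    ext x y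
    simp [N, e, Matrix.toBlocks₂₂, Matrix.toBlocks₂₁, Matrix.toBlocks₁₂, Matrix.mul_apply,
      defLap_induce_compl_singleton_apply hu]
  calc (defLap (G.induce {u}ᶜ) s).det
      = (Matrix.fromBlocks 1 N.toBlocks₁₂ N.toBlocks₂₁ N.toBlocks₂₂).det := by
        rw [Matrix.det_fromBlocks_one₁₁, hschur]
    _ = N.det := by rw [← hleaf, Matrix.fromBlocks_toBlocks]
    _ = (defLap G s).det := Matrix.det_submatrix_equiv_self e _

lemma IsTree.induce_compl_singleton_of_degree_eq_one {W : Type*} {H : SimpleGraph W} {u : W}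
    [Fintype (H.neighborSet u)] (hH : H.IsTree) (hu : H.degree u = 1) : (H.induce {u}ᶜ).IsTree :=
  ⟨hH.connected.induce_compl_singleton_of_degree_eq_one hu, hH.isAcyclic.induce _⟩

theorem IsTree.det_defLap (hG : G.IsTree) (s : ℝ) : (defLap G s).det = 1 - s ^ 2 := by
  induction hn : Fintype.card V using Nat.strong_induction_on generalizing V with
  | _ n ih =>
  classical
  rcases subsingleton_or_nontrivial V with hV | hV
  · have : Nonempty V := hG.connected.nonempty
    have : Unique V := (nonempty_unique V).some
    exact det_defLap_of_unique s
  · obtain ⟨u, hu⟩ := hG.exists_vert_degree_one_of_nontrivial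
    have hcard : Fintype.card ↥({u}ᶜ : Set V) < n :=
      hn ▸ Fintype.card_subtype_lt (x := u) (by simp)
    rw [← det_defLap_induce_compl_singleton hu,
      ih _ hcard (hG.induce_compl_singleton_of_degree_eq_one hu) rfl]

end SimpleGraph

theorem stmt7 {V : Type*} [Fintype V] [DecidableEq V] (T : SimpleGraph V)
    (hT : T.IsTree) (s : ℝ) :
    (∃ v : V → ℝ, v ≠ 0 ∧ (defLap T s).mulVec v = 0) ↔ s = 1 ∨ s = -1 := by
  rw [Matrix.exists_mulVec_eq_zero_iff, hT.det_defLap, sub_eq_zero, eq_comm, sq_eq_one_iff]
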